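/- With T = tanh((S-s)/h) where S ∼ w_s, the second derivative of the perturbed calibration function η(s) = E_{w_s}[η₀] equals (1/h²)·(Cov_{w_s}(η₀(S), 2T² - 1) - 2·E_{w_s}[T]·Cov_{w_s}(η₀(S), T)). -/

import Mathlib

open Real MeasureTheory

/-- Sech kernel normalization constant `Z(u,h) = ∫₀¹ sech((t-u)/h) dt`. -/
noncomputable def Zker (u h : ℝ) : ℝ := ∫ t in (0:ℝ)..1, 1 / Real.cosh ((t - u) / h)

/-- Unnormalized kernel weight `(1/Z(u,h))·sech((s-u)/h)`. -/
noncomputable def kerW (h s u : ℝ) : ℝ := (1 / Zker u h) * (1 / Real.cosh ((s - u) / h))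

/-- Denominator `D(s) = ∫ (1/Z(u,h))·sech((s-u)/h) dμ(u)`. -/
noncomputable def Dfun (μ : Measure ℝ) (h s : ℝ) : ℝ := ∫ u, kerW h s u ∂μ

/-- Expectation of `A` under the reweighted measure `w_s` (density `kerW h s / D(s)` w.r.t. μ). -/
noncomputable def wExp (μ : Measure ℝ) (h s : ℝ) (A : ℝ → ℝ) : ℝ :=
  (∫ u, A u * kerW h s u ∂μ) / Dfun μ h s

/-- Covariance of `A` and `B` under `w_s`. -/
noncomputable def wCov (μ : Measure ℝ) (h s : ℝ) (A B : ℝ → ℝ) : ℝ :=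
  wExp μ h s (fun u => A u * B u) - wExp μ h s A * wExp μ h s B

/-! The kernel `k_s(u) = kerW h s u` satisfies `∂ₛ k_s = (T / h) k_s` and
`∂ₛ (T k_s) = ((2T² - 1) / h) k_s`, where `T = tanh ((u - s) / h)`. On the support `[0, 1]` of `μ`
these are bounded uniformly in `s`, so the numerator `∫ η₀ k_s dμ` and the denominator `∫ k_s dμ`
of `E_{w_s}[η₀]` can be differentiated twice under the integral sign. The second-order quotient
rule then expresses `η''(s)` through the `w_s`-moments of `η₀`, `T` and `2T² - 1`, which regroup
into the two covariances. -/

open Filter Set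

theorem Real.hasDerivAt_tanh (x : ℝ) : HasDerivAt tanh (1 - tanh x ^ 2) x := by
  have h := (hasDerivAt_sinh x).div (hasDerivAt_cosh x) (cosh_pos x).ne'
  rw [show sinh / cosh = tanh from funext fun y => (tanh_eq_sinh_div_cosh y).symm] at h
  refine h.congr_deriv ?_
  rw [tanh_eq_sinh_div_cosh]
  field_simp

@[fun_prop]
theorem Real.continuous_tanh : Continuous tanh :=
  continuous_iff_continuousAt.2 fun x => (hasDerivAt_tanh x).continuousAt

theorem Real.abs_two_mul_tanh_sq_sub_one_le (x : ℝ) : |2 * tanh x ^ 2 - 1| ≤ 1 := by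
  have := tanh_sq_lt_one x
  rw [abs_le]
  constructor <;> nlinarith [sq_nonneg (tanh x)]

theorem deriv_deriv_div {N D N' D' : ℝ → ℝ} {N'' D'' x₀ : ℝ}
    (hN : ∀ x, HasDerivAt N (N' x) x) (hD : ∀ x, HasDerivAt D (D' x) x) (hD₀ : ∀ x, D x ≠ 0)
    (hN' : HasDerivAt N' N'' x₀) (hD' : HasDerivAt D' D'' x₀) :
    deriv (deriv fun x => N x / D x) x₀ =
      N'' / D x₀ - 2 * (N' x₀ / D x₀) * (D' x₀ / D x₀) - N x₀ / D x₀ * (D'' / D x₀)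
        + 2 * (N x₀ / D x₀) * (D' x₀ / D x₀) ^ 2 := by
  have hderiv : deriv (fun x => N x / D x) = fun x => (N' x * D x - N x * D' x) / D x ^ 2 :=
    funext fun x => ((hN x).div (hD x) (hD₀ x)).deriv
  rw [hderiv]
  refine ((((hN'.mul (hD x₀)).sub ((hN x₀).mul hD')).div ((hD x₀).pow 2)
    (pow_ne_zero 2 (hD₀ x₀))).deriv).trans ?_
  simp only [Pi.mul_apply, Pi.sub_apply, Pi.pow_apply]
  have := hD₀ x₀
  field_simp
  ring

theorem hasDerivAt_integral_mul_of_abs_le {α : Type*} [MeasurableSpace α] {μ : Measure α}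
    [IsFiniteMeasure μ] {f : α → ℝ} {K K' : ℝ → α → ℝ} {B C C' x₀ : ℝ}
    (hf : AEStronglyMeasurable f μ) (hfB : ∀ᵐ a ∂μ, |f a| ≤ B)
    (hK : ∀ x, AEStronglyMeasurable (K x) μ) (hK' : AEStronglyMeasurable (K' x₀) μ)
    (hKC : ∀ᵐ a ∂μ, |K x₀ a| ≤ C) (hK'C : ∀ᵐ a ∂μ, ∀ x, |K' x a| ≤ C')
    (hKK' : ∀ a x, HasDerivAt (K · a) (K' x a) x) :
    HasDerivAt (fun x => ∫ a, f a * K x a ∂μ) (∫ a, f a * K' x₀ a ∂μ) x₀ := by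
  have hfK : Integrable (fun a => f a * K x₀ a) μ := by
    refine .of_bound (hf.mul (hK x₀)) (B * C) ?_
    filter_upwards [hfB, hKC] with a hfa hKa
    rw [Real.norm_eq_abs, abs_mul]
    exact mul_le_mul hfa hKa (abs_nonneg _) ((abs_nonneg _).trans hfa)
  refine (hasDerivAt_integral_of_dominated_loc_of_deriv_le (bound := fun _ => B * C') univ_mem
    (.of_forall fun x => hf.mul (hK x)) hfK (hf.mul hK') ?_ (integrable_const _)
    (.of_forall fun a x _ => (hKK' a x).const_mul (f a))).2
  filter_upwards [hfB, hK'C] with a hfa hK'a x _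
  rw [Real.norm_eq_abs, abs_mul]
  exact mul_le_mul hfa (hK'a x) (abs_nonneg _) ((abs_nonneg _).trans hfa)

section Kernel

variable {h : ℝ}

theorem continuous_sech_div (u : ℝ) : Continuous fun t => 1 / cosh ((t - u) / h) :=
  continuous_const.div (by fun_prop) fun _ => (cosh_pos _).ne'

theorem continuous_Zker : Continuous fun u => Zker u h := by
  have := intervalIntegral.continuous_parametric_intervalIntegral_of_continuous' (μ := volume)
    (f := fun u t => 1 / cosh ((t - u) / h))
    (continuous_const.div (by fun_prop) fun _ => (cosh_pos _).ne') 0 1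
  simpa [Zker] using this

theorem Zker_pos (u : ℝ) : 0 < Zker u h :=
  intervalIntegral.intervalIntegral_pos_of_pos_on ((continuous_sech_div u).intervalIntegrable _ _)
    (fun _ _ => by positivity) one_pos

theorem inv_cosh_le_Zker (hh : 0 < h) {u : ℝ} (hu : u ∈ Icc (0 : ℝ) 1) :
    (cosh (1 / h))⁻¹ ≤ Zker u h := by
  have hle : ∫ _ in (0 : ℝ)..1, (cosh (1 / h))⁻¹ ≤ Zker u h := by
    refine intervalIntegral.integral_mono_on zero_le_one (by simp)
      ((continuous_sech_div u).intervalIntegrable _ _) fun t ht => ?_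
    rw [one_div (cosh _), inv_le_inv₀ (cosh_pos _) (cosh_pos _), cosh_le_cosh, abs_div, abs_div,
      abs_of_pos hh, abs_one]
    exact div_le_div_of_nonneg_right (abs_sub_le_iff.2 ⟨by linarith [ht.2, hu.1],
      by linarith [ht.1, hu.2]⟩) hh.le
  simpa using hle

theorem kerW_pos (s u : ℝ) : 0 < kerW h s u :=
  mul_pos (one_div_pos.2 (Zker_pos u)) (one_div_pos.2 (cosh_pos _))

theorem kerW_le_cosh (hh : 0 < h) (s : ℝ) {u : ℝ} (hu : u ∈ Icc (0 : ℝ) 1) :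
    kerW h s u ≤ cosh (1 / h) := by
  have hZ : 1 / Zker u h ≤ cosh (1 / h) := by
    rw [one_div, inv_le_comm₀ (Zker_pos u) (cosh_pos _)]
    exact inv_cosh_le_Zker hh hu
  have hsech : 1 / cosh ((s - u) / h) ≤ 1 := by
    rw [div_le_one (cosh_pos _)]
    exact one_le_cosh _
  exact (mul_le_mul hZ hsech (by positivity) (cosh_pos _).le).trans_eq (mul_one _)

theorem abs_kerW_le (hh : 0 < h) (s : ℝ) {u : ℝ} (hu : u ∈ Icc (0 : ℝ) 1) :
    |kerW h s u| ≤ cosh (1 / h) :=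
  (abs_of_pos (kerW_pos s u)).trans_le (kerW_le_cosh hh s hu)

theorem abs_mul_kerW_le (hh : 0 < h) (s : ℝ) {u c : ℝ} (hu : u ∈ Icc (0 : ℝ) 1) (hc : |c| ≤ 1) :
    |c * kerW h s u| ≤ cosh (1 / h) := by
  rw [abs_mul, abs_of_pos (kerW_pos s u)]
  simpa using mul_le_mul hc (kerW_le_cosh hh s hu) (kerW_pos s u).le zero_le_one

@[fun_prop]
theorem continuous_kerW (s : ℝ) : Continuous (kerW h s) :=
  (continuous_const.div continuous_Zker fun u => (Zker_pos u).ne').mul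
    (continuous_const.div (by fun_prop) fun _ => (cosh_pos _).ne')

theorem hasDerivAt_kerW (u s : ℝ) :
    HasDerivAt (kerW h · u) ((1 / h) * (tanh ((u - s) / h) * kerW h s u)) s := by
  have hcosh : HasDerivAt (fun s' => cosh ((s' - u) / h)) (sinh ((s - u) / h) * (1 / h)) s :=
    (((hasDerivAt_id' s).sub_const u).div_const h).cosh
  refine (((hasDerivAt_const s 1).div hcosh (cosh_pos _).ne').const_mul
    (1 / Zker u h)).congr_deriv ?_
  rw [kerW, show (u - s) / h = -((s - u) / h) by ring, tanh_neg, tanh_eq_sinh_div_cosh]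
  field_simp
  ring

theorem hasDerivAt_tanh_mul_kerW (u s : ℝ) :
    HasDerivAt (fun s' => tanh ((u - s') / h) * kerW h s' u)
      ((1 / h) * ((2 * tanh ((u - s) / h) ^ 2 - 1) * kerW h s u)) s := by
  have htanh : HasDerivAt (fun s' => tanh ((u - s') / h))
      ((1 - tanh ((u - s) / h) ^ 2) * (-1 / h)) s :=
    (hasDerivAt_tanh _).comp s (((hasDerivAt_id' s).const_sub u).div_const h)
  refine (htanh.mul (hasDerivAt_kerW u s)).congr_deriv ?_
  ring

end Kernel

section Integral

variable {μ : Measure ℝ} [IsFiniteMeasure μ] {h : ℝ} {f : ℝ → ℝ} {B : ℝ}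

theorem abs_one_div_mul_mul_kerW_le (hh : 0 < h) (s : ℝ) {u c : ℝ} (hu : u ∈ Icc (0 : ℝ) 1)
    (hc : |c| ≤ 1) : |1 / h * (c * kerW h s u)| ≤ 1 / h * cosh (1 / h) := by
  rw [abs_mul, abs_of_pos (one_div_pos.2 hh)]
  exact mul_le_mul_of_nonneg_left (abs_mul_kerW_le hh s hu hc) (one_div_pos.2 hh).le

theorem hasDerivAt_integral_mul_kerW (hμ : ∀ᵐ u ∂μ, u ∈ Icc (0 : ℝ) 1) (hh : 0 < h)
    (hf : AEStronglyMeasurable f μ) (hfB : ∀ᵐ u ∂μ, |f u| ≤ B) (s : ℝ) :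
    HasDerivAt (fun s' => ∫ u, f u * kerW h s' u ∂μ)
      ((1 / h) * ∫ u, f u * tanh ((u - s) / h) * kerW h s u ∂μ) s := by
  have hderiv := hasDerivAt_integral_mul_of_abs_le (K := fun s' u => kerW h s' u)
    (x₀ := s) (K' := fun s' u => 1 / h * (tanh ((u - s') / h) * kerW h s' u)) hf hfB
    (fun s' => (continuous_kerW s').aestronglyMeasurable)
    (Continuous.aestronglyMeasurable (by fun_prop))
    (hμ.mono fun u hu => abs_kerW_le hh s hu)
    (hμ.mono fun u hu s' => abs_one_div_mul_mul_kerW_le hh s' hu (abs_tanh_lt_one _).le)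
    (fun u s' => hasDerivAt_kerW u s')
  rw [← integral_const_mul]
  exact hderiv.congr_deriv (integral_congr_ae (.of_forall fun u => by ring))

theorem hasDerivAt_integral_mul_tanh_mul_kerW (hμ : ∀ᵐ u ∂μ, u ∈ Icc (0 : ℝ) 1) (hh : 0 < h)
    (hf : AEStronglyMeasurable f μ) (hfB : ∀ᵐ u ∂μ, |f u| ≤ B) (s : ℝ) :
    HasDerivAt (fun s' => ∫ u, f u * tanh ((u - s') / h) * kerW h s' u ∂μ)
      ((1 / h) * ∫ u, f u * (2 * tanh ((u - s) / h) ^ 2 - 1) * kerW h s u ∂μ) s := by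
  have hderiv := hasDerivAt_integral_mul_of_abs_le
    (K := fun s' u => tanh ((u - s') / h) * kerW h s' u)
    (x₀ := s) (K' := fun s' u => 1 / h * ((2 * tanh ((u - s') / h) ^ 2 - 1) * kerW h s' u))
    hf hfB
    (fun s' => Continuous.aestronglyMeasurable (by fun_prop))
    (Continuous.aestronglyMeasurable (by fun_prop))
    (hμ.mono fun u hu => abs_mul_kerW_le hh s hu (abs_tanh_lt_one _).le)
    (hμ.mono fun u hu s' =>
      abs_one_div_mul_mul_kerW_le hh s' hu (abs_two_mul_tanh_sq_sub_one_le _))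
    (fun u s' => hasDerivAt_tanh_mul_kerW u s')
  simp only [← mul_assoc] at hderiv
  rw [← integral_const_mul]
  exact hderiv.congr_deriv (integral_congr_ae (.of_forall fun u => by ring))

theorem hasDerivAt_Dfun (hμ : ∀ᵐ u ∂μ, u ∈ Icc (0 : ℝ) 1) (hh : 0 < h) (s : ℝ) :
    HasDerivAt (Dfun μ h) ((1 / h) * ∫ u, tanh ((u - s) / h) * kerW h s u ∂μ) s := by
  have hderiv := hasDerivAt_integral_mul_kerW hμ hh aestronglyMeasurable_const
    (B := 1) (f := fun _ => 1) (by simp) s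
  simp only [one_mul] at hderiv
  exact hderiv

theorem Dfun_pos [NeZero μ] (hμ : ∀ᵐ u ∂μ, u ∈ Icc (0 : ℝ) 1) (hh : 0 < h) (s : ℝ) :
    0 < Dfun μ h s := by
  have hint : Integrable (kerW h s) μ :=
    .of_bound (continuous_kerW s).aestronglyMeasurable (cosh (1 / h))
      (hμ.mono fun u hu => abs_kerW_le hh s hu)
  rw [Dfun, integral_pos_iff_support_of_nonneg (fun u => (kerW_pos s u).le) hint,
    Function.support_eq_univ fun u => (kerW_pos s u).ne']
  exact Measure.measure_univ_pos.2 (NeZero.ne μ)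

end Integral

theorem perturbed_calibration_second_deriv_cov_general
    (μ : Measure ℝ) [IsProbabilityMeasure μ] (hsupp : μ (Set.Icc (0:ℝ) 1) = 1)
    (η₀ : ℝ → ℝ) (hη₀meas : Measurable η₀) (hη₀b : ∀ u ∈ Set.Icc (0:ℝ) 1, η₀ u ∈ Set.Icc (0:ℝ) 1)
    (h : ℝ) (hh : 0 < h) (s : ℝ) :
    deriv (deriv (fun s' => wExp μ h s' η₀)) s
      = (1 / h ^ 2) *
          (wCov μ h s η₀ (fun u => 2 * Real.tanh ((u - s) / h) ^ 2 - 1)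
            - 2 * wExp μ h s (fun u => Real.tanh ((u - s) / h))
                * wCov μ h s η₀ (fun u => Real.tanh ((u - s) / h))) := by
  have hμ : ∀ᵐ u ∂μ, u ∈ Icc (0 : ℝ) 1 :=
    (ae_mem_iff_measure_eq measurableSet_Icc.nullMeasurableSet).2 (by rw [hsupp, measure_univ])
  have hη₀B : ∀ᵐ u ∂μ, |η₀ u| ≤ 1 :=
    hμ.mono fun u hu => abs_le.2 ⟨by linarith [(hη₀b u hu).1], (hη₀b u hu).2⟩
  have hη₀ := hη₀meas.aestronglyMeasurable (μ := μ)
  have hD' := (hasDerivAt_integral_mul_tanh_mul_kerW hμ hh aestronglyMeasurable_const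
    (B := 1) (f := fun _ => 1) (by simp) s).const_mul (1 / h)
  simp only [one_mul] at hD'
  rw [show (fun s' => wExp μ h s' η₀) = fun s' => (∫ u, η₀ u * kerW h s' u ∂μ) / Dfun μ h s'
      from rfl,
    deriv_deriv_div (fun x => hasDerivAt_integral_mul_kerW hμ hh hη₀ hη₀B x)
      (hasDerivAt_Dfun hμ hh) (fun x => (Dfun_pos hμ hh x).ne')
      ((hasDerivAt_integral_mul_tanh_mul_kerW hμ hh hη₀ hη₀B s).const_mul (1 / h)) hD']
  simp only [wCov, wExp]
  ring

theorem perturbed_calibration_second_deriv_cov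
    (μ : Measure ℝ) [IsProbabilityMeasure μ] (hsupp : μ (Set.Icc (0:ℝ) 1) = 1)
    (η₀ : ℝ → ℝ) (hη₀meas : Measurable η₀) (hη₀b : ∀ u ∈ Set.Icc (0:ℝ) 1, η₀ u ∈ Set.Icc (0:ℝ) 1)
    (h : ℝ) (hh : 0 < h) (s : ℝ) (hs : s ∈ Set.Icc (0:ℝ) 1) :
    deriv (deriv (fun s' => wExp μ h s' η₀)) s
      = (1 / h ^ 2) *
          (wCov μ h s η₀ (fun u => 2 * Real.tanh ((u - s) / h) ^ 2 - 1)
            - 2 * wExp μ h s (fun u => Real.tanh ((u - s) / h))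
                * wCov μ h s η₀ (fun u => Real.tanh ((u - s) / h))) :=
  perturbed_calibration_second_deriv_cov_general μ hsupp η₀ hη₀meas hη₀b h hh s
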